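/- arXiv:1602.06659 — 6 statements merged into one kernel-verified Lean document; each statement's English description precedes it below -/
import Mathlib

section
/- For any finite job set 𝒥 and any feasible schedule S of 𝒥, Σ_{t∈ℤ} avg(t)^α ≤ ((2α)^α / 2) · cost(S). (This is the statement that the speed profile of the AVR algorithm on the corresponding DVS instance has cost at most (2α)^α/2 times the optimal Grid cost.) -/
open scoped BigOperators NNReal

structure Job where
  r : ℤ
  d : ℤ
  w : ℤ
  h : ℝ

def Job.Valid (J : Job) : Prop := 1 ≤ J.w ∧ 0 < J.h ∧ J.r + J.w ≤ J.d

def Feasible {ι : Type*} (job : ι → Job) (st : ι → ℤ) : Prop :=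
  ∀ i, (job i).r ≤ st i ∧ st i + (job i).w ≤ (job i).d

noncomputable def load {ι : Type*} [Fintype ι] (job : ι → Job) (st : ι → ℤ) (t : ℤ) : ℝ :=
  ∑ i, if st i ≤ t ∧ t < st i + (job i).w then (job i).h else 0

noncomputable def cost {ι : Type*} [Fintype ι] (α : ℝ) (job : ι → Job) (st : ι → ℤ) : ℝ :=
  ∑' t : ℤ, load job st t ^ α

noncomputable def OPT {ι : Type*} [Fintype ι] (α : ℝ) (job : ι → Job) : ℝ :=
  sInf {c : ℝ | ∃ st, Feasible job st ∧ cost α job st = c}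

noncomputable def den (J : Job) : ℝ := (J.w * J.h) / (J.d - J.r)

noncomputable def avg {ι : Type*} [Fintype ι] (job : ι → Job) (t : ℤ) : ℝ :=
  ∑ i, if (job i).r ≤ t ∧ t < (job i).d then den (job i) else 0

/-!
Put `g = avg ^ (α - 1)`, so that `∑ avg ^ α = ∑ avg * g`. A job spreads its density uniformly over
`[r, d)`, and at every slot `s` of `[r, d)` the average of `g` over `[r, d)` is at most
`H s`, the larger of the forward and the backward maximal average of `g` at `s`.
Summing over the slots where the job runs gives `∑ avg * g ≤ ∑ load * H`.

By the rising sun lemma each one-sided maximal function is of weak type `(1, 1)` with constant `1`,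
hence (layer cake and Hölder) bounded on `ℓ^q` by `q / (q - 1) = α`, where `q` is the exponent
conjugate to `α`. Thus `∑ H ^ q ≤ 2 α ^ q ∑ avg ^ α`, and Hölder's inequality
`∑ load * H ≤ (∑ load ^ α) ^ (1 / α) (∑ H ^ q) ^ (1 / q)` yields
`∑ avg ^ α ≤ 2 ^ (α - 1) α ^ α ∑ load ^ α`.
-/

open Finset

theorem sum_Ico_telescope {M : Type*} [AddCommGroup M] (f : ℤ → M) {A E : ℤ} (h : A ≤ E) :
    ∑ t ∈ Ico A E, (f t - f (t + 1)) = f A - f E := by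
  induction E, h using Int.leInduction with
  | base => simp
  | succ E hAE ih => rw [← sum_Ico_add_eq_sum_Ico_add_one hAE, ih, sub_add_sub_cancel]

theorem sum_Ico_sub_const (g : ℤ → ℝ) (c : ℝ) {a b : ℤ} (hab : a ≤ b) :
    ∑ u ∈ Ico a b, (g u - c) = ∑ u ∈ Ico a b, g u - (b - a) * c := by
  rw [sum_sub_distrib, sum_const, Int.card_Ico, nsmul_eq_mul, ← Int.cast_natCast,
    Int.toNat_of_nonneg (by omega), Int.cast_sub]

theorem rising_sun (f : ℤ → ℝ) (A E : ℤ) :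
    0 ≤ ∑ t ∈ Ico A E with ∃ b ∈ Ioc t E, 0 ≤ ∑ u ∈ Ico t b, f u, f t := by
  -- `D t - D (t + 1)` is at most `f t` at the points counted and at most `0` elsewhere,
  -- and it telescopes to `D A ≥ 0`.
  set D : ℤ → ℝ := fun t =>
    (Icc t (max t E)).sup' (nonempty_Icc.2 (le_max_left t E)) fun b => ∑ u ∈ Ico t b, f u
  have hD_nonneg : ∀ t, 0 ≤ D t := fun t => by
    simpa using le_sup' (fun b => ∑ u ∈ Ico t b, f u) (left_mem_Icc.2 (le_max_left t E))
  have hD_le : ∀ t b, t < b → b ≤ E → ∑ u ∈ Ico t b, f u ≤ f t + D (t + 1) := by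
    intro t b htb hbE
    rw [← insert_Ico_add_one_left_eq_Ico htb, sum_insert (by simp)]
    exact add_le_add_right (le_sup' (fun b => ∑ u ∈ Ico (t + 1) b, f u)
      (mem_Icc.2 ⟨by omega, by omega⟩)) _
  have hstep : ∀ t, D t - D (t + 1) ≤
      if ∃ b ∈ Ioc t E, 0 ≤ ∑ u ∈ Ico t b, f u then f t else 0 := by
    intro t
    split_ifs with ht
    · obtain ⟨b₀, hb₀, hsum₀⟩ := ht
      have : D t ≤ f t + D (t + 1) := sup'_le _ _ fun b hb => by
        rw [mem_Icc] at hb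
        rcases hb.1.eq_or_lt with rfl | htb
        · simpa using hsum₀.trans (hD_le _ _ (mem_Ioc.1 hb₀).1 (mem_Ioc.1 hb₀).2)
        · exact hD_le t b htb (by omega)
      linarith
    · push Not at ht
      have : D t ≤ 0 := sup'_le _ _ fun b hb => by
        rw [mem_Icc] at hb
        rcases hb.1.eq_or_lt with rfl | htb
        · simp
        · exact (ht b (mem_Ioc.2 ⟨htb, by omega⟩)).le
      linarith [hD_nonneg (t + 1)]
  rcases le_or_gt A E with hAE | hEA
  · have hD_E : D E = 0 := by simp [D]
    rw [sum_filter]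
    calc 0 ≤ D A - D E := by rw [hD_E, sub_zero]; exact hD_nonneg A
      _ = ∑ t ∈ Ico A E, (D t - D (t + 1)) := (sum_Ico_telescope D hAE).symm
      _ ≤ _ := sum_le_sum fun t _ => hstep t
  · simp [Ico_eq_empty_of_le hEA.le]

section MaximalAverage

/-- The empty window `b = s` contributes `0 / 0 = 0`, so `fwdMaxAvg E g s = 0` for `s ≥ E`. -/
noncomputable def fwdMaxAvg (E : ℤ) (g : ℤ → ℝ) (s : ℤ) : ℝ :=
  (Icc s (max s E)).sup' (nonempty_Icc.2 (le_max_left s E))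
    fun b => (∑ u ∈ Ico s b, g u) / (b - s)

variable {E : ℤ} {g : ℤ → ℝ}

theorem fwdMaxAvg_nonneg (E : ℤ) (g : ℤ → ℝ) (s : ℤ) : 0 ≤ fwdMaxAvg E g s := by
  calc (0 : ℝ) = (∑ u ∈ Ico s s, g u) / ((s : ℝ) - s) := by simp
    _ ≤ fwdMaxAvg E g s := le_sup' (fun b => (∑ u ∈ Ico s b, g u) / ((b : ℝ) - s))
      (left_mem_Icc.2 (le_max_left s E))

theorem fwdMaxAvg_self (E : ℤ) (g : ℤ → ℝ) : fwdMaxAvg E g E = 0 := by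
  simp [fwdMaxAvg]

theorem sum_Ico_le_mul_fwdMaxAvg {s b : ℤ} (hsb : s ≤ b) (hbE : b ≤ E) :
    ∑ u ∈ Ico s b, g u ≤ (b - s) * fwdMaxAvg E g s := by
  rcases hsb.eq_or_lt with rfl | hsb
  · simp
  rw [← div_le_iff₀' (sub_pos.2 (Int.cast_lt.2 hsb))]
  exact le_sup' (fun b => (∑ u ∈ Ico s b, g u) / ((b : ℝ) - s))
    (mem_Icc.2 ⟨hsb.le, le_max_of_le_right hbE⟩)

theorem le_fwdMaxAvg_iff {c : ℝ} (hc : 0 < c) {t : ℤ} :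
    c ≤ fwdMaxAvg E g t ↔ ∃ b ∈ Ioc t E, 0 ≤ ∑ u ∈ Ico t b, (g u - c) := by
  constructor
  · intro h
    obtain ⟨b, hb, hmax⟩ := exists_mem_eq_sup' (nonempty_Icc.2 (le_max_left t E))
      fun b => (∑ u ∈ Ico t b, g u) / ((b : ℝ) - t)
    rw [mem_Icc] at hb
    rcases hb.1.eq_or_lt with rfl | htb
    · simp [fwdMaxAvg, hmax] at h
      linarith
    refine ⟨b, mem_Ioc.2 ⟨htb, by omega⟩, ?_⟩
    rw [fwdMaxAvg, hmax, le_div_iff₀ (sub_pos.2 (Int.cast_lt.2 htb))] at h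
    rw [sum_Ico_sub_const g c htb.le]
    linarith
  · rintro ⟨b, hb, hsum⟩
    rw [mem_Ioc] at hb
    rw [sum_Ico_sub_const g c hb.1.le] at hsum
    have hpos : (0 : ℝ) < b - t := sub_pos.2 (Int.cast_lt.2 hb.1)
    have := sum_Ico_le_mul_fwdMaxAvg (g := g) hb.1.le hb.2
    nlinarith

/-- Weak-type `(1, 1)` bound of `M` by `g` with constant `1`. -/
def SuperlevelBound {τ : Type*} (W : Finset τ) (M g : τ → ℝ) : Prop :=
  ∀ c > 0, c * #{t ∈ W | c ≤ M t} ≤ ∑ t ∈ W with c ≤ M t, g t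

theorem superlevelBound_fwdMaxAvg (A E : ℤ) (g : ℤ → ℝ) :
    SuperlevelBound (Ico A E) (fwdMaxAvg E g) g := by
  intro c hc
  have h := rising_sun (fun u => g u - c) A E
  rw [← filter_congr fun t _ => le_fwdMaxAvg_iff hc, sum_sub_distrib, sum_const,
    nsmul_eq_mul] at h
  linarith

end MaximalAverage

section LayerCake

variable {τ : Type*} {W : Finset τ} {M g : τ → ℝ} {p q : ℝ}

theorem SuperlevelBound.min_const (h : SuperlevelBound W M g) (c' : ℝ) :
    SuperlevelBound W (fun t => min (M t) c') g := by
  intro c hc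
  by_cases hcc : c ≤ c'
  · simpa only [le_min_iff, hcc, and_true] using h c hc
  · have : {t ∈ W | c ≤ min (M t) c'} = ∅ :=
      filter_eq_empty_iff.2 fun t _ h' => hcc (h'.trans (min_le_right _ _))
    rw [this, card_empty, sum_empty, Nat.cast_zero, mul_zero]

theorem rpow_sub_rpow_le_mul_sub_rpow (hpq : p.HolderConjugate q) {a b : ℝ} (hb : 0 ≤ b)
    (hba : b ≤ a) : a ^ p - b ^ p ≤ q * a * (a ^ (p - 1) - b ^ (p - 1)) := by
  have ha : 0 ≤ a := hb.trans hba
  have hyoung := Real.young_inequality_of_nonneg ha (Real.rpow_nonneg hb (p - 1)) hpq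
  rw [← Real.rpow_mul hb, hpq.sub_one_mul_conj] at hyoung
  have hap : a ^ p = a * a ^ (p - 1) := by
    rw [← Real.rpow_one_add' ha (by linarith [hpq.lt]), add_sub_cancel]
  have hqp : q / p = q - 1 := hpq.symm.div_conj_eq_sub_one
  have hq := hpq.symm.pos
  have : q * (a * b ^ (p - 1)) ≤ (q - 1) * a ^ p + b ^ p := by
    calc q * (a * b ^ (p - 1)) ≤ q * (a ^ p / p + b ^ p / q) := by gcongr
      _ = q / p * a ^ p + b ^ p := by field_simp
      _ = (q - 1) * a ^ p + b ^ p := by rw [hqp]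
  rw [hap] at this ⊢
  nlinarith

theorem SuperlevelBound.sum_rpow_sub_sum_min_rpow_le (hpq : p.HolderConjugate q)
    (hMg : SuperlevelBound W M g) {c c' : ℝ} (hc : 0 < c) (hc' : 0 ≤ c') (hc'c : c' < c)
    (hle_c : ∀ t ∈ W, M t ≤ c) (hle_c' : ∀ t ∈ W, M t < c → M t ≤ c') :
    ∑ t ∈ W, M t ^ p - ∑ t ∈ W, min (M t) c' ^ p ≤
      q * (∑ t ∈ W, g t * M t ^ (p - 1) - ∑ t ∈ W, g t * min (M t) c' ^ (p - 1)) := by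
  have hlevel : ∀ t ∈ W, (c ≤ M t ∧ M t = c ∧ min (M t) c' = c') ∨
      (¬ c ≤ M t ∧ min (M t) c' = M t) := by
    intro t ht
    by_cases hct : c ≤ M t
    · have hMt : M t = c := le_antisymm (hle_c t ht) hct
      exact Or.inl ⟨hct, hMt, min_eq_right (hMt ▸ hc'c.le)⟩
    · exact Or.inr ⟨hct, min_eq_left (hle_c' t ht (not_le.1 hct))⟩
  have hdiff : ∑ t ∈ W, M t ^ p - ∑ t ∈ W, min (M t) c' ^ p =
      #{t ∈ W | c ≤ M t} * (c ^ p - c' ^ p) := by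
    rw [← sum_sub_distrib, ← nsmul_eq_mul, ← sum_const, sum_filter]
    refine sum_congr rfl fun t ht => ?_
    rcases hlevel t ht with ⟨hct, hMt, hM't⟩ | ⟨hct, hM't⟩
    · rw [if_pos hct, hM't, hMt]
    · rw [if_neg hct, hM't, sub_self]
  have hdiff' : ∑ t ∈ W, g t * M t ^ (p - 1) - ∑ t ∈ W, g t * min (M t) c' ^ (p - 1) =
      (∑ t ∈ W with c ≤ M t, g t) * (c ^ (p - 1) - c' ^ (p - 1)) := by
    rw [← sum_sub_distrib, sum_mul, sum_filter]
    refine sum_congr rfl fun t ht => ?_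
    rcases hlevel t ht with ⟨hct, hMt, hM't⟩ | ⟨hct, hM't⟩
    · rw [if_pos hct, hM't, hMt, mul_sub]
    · rw [if_neg hct, hM't, sub_self]
  rw [hdiff, hdiff']
  calc #{t ∈ W | c ≤ M t} * (c ^ p - c' ^ p)
      ≤ #{t ∈ W | c ≤ M t} * (q * c * (c ^ (p - 1) - c' ^ (p - 1))) := by
        gcongr
        exact rpow_sub_rpow_le_mul_sub_rpow hpq hc' hc'c.le
    _ = q * ((c * #{t ∈ W | c ≤ M t}) * (c ^ (p - 1) - c' ^ (p - 1))) := by ring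
    _ ≤ q * ((∑ t ∈ W with c ≤ M t, g t) * (c ^ (p - 1) - c' ^ (p - 1))) := by
        have hgap : 0 ≤ c ^ (p - 1) - c' ^ (p - 1) :=
          sub_nonneg.2 (Real.rpow_le_rpow hc' hc'c.le hpq.sub_one_pos.le)
        gcongr
        · exact hpq.symm.pos.le
        · exact hMg c hc

theorem card_filter_image_min_lt {c c' : ℝ} (hc : c ∈ W.image M) (hc_pos : 0 < c)
    (hc'c : c' < c) (hle_c' : ∀ t ∈ W, M t < c → M t ≤ c') (hc' : c' = 0 ∨ c' ∈ W.image M) :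
    #{x ∈ W.image (fun t => min (M t) c') | 0 < x} < #{x ∈ W.image M | 0 < x} := by
  refine card_lt_card (Finset.ssubset_of_subset_of_ssubset ?_
    (erase_ssubset (mem_filter.2 ⟨hc, hc_pos⟩)))
  intro x hx
  obtain ⟨⟨t, ht, rfl⟩, hxpos⟩ : (∃ t ∈ W, min (M t) c' = x) ∧ 0 < x := by simpa using hx
  rw [mem_erase, mem_filter]
  by_cases hlt : M t < c
  · rw [min_eq_left (hle_c' t ht hlt)] at hxpos ⊢
    exact ⟨hlt.ne, mem_image_of_mem M ht, hxpos⟩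
  · rw [min_eq_right (hc'c.le.trans (not_lt.1 hlt))] at hxpos ⊢
    exact ⟨hc'c.ne, hc'.resolve_left hxpos.ne', hxpos⟩

/-- Discrete layer-cake estimate, by induction on the number of positive values of `M`: the top
value `c` is lowered to the next value `c'` below it (or to `0`). -/
theorem SuperlevelBound.sum_rpow_le (hpq : p.HolderConjugate q) (hM : ∀ t ∈ W, 0 ≤ M t)
    (hMg : SuperlevelBound W M g) :
    ∑ t ∈ W, M t ^ p ≤ q * ∑ t ∈ W, g t * M t ^ (p - 1) := by
  induction hn : #{x ∈ W.image M | 0 < x} using Nat.strong_induction_on generalizing M with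
  | _ n ih =>
  by_cases hpos : ∃ t ∈ W, 0 < M t
  swap
  · push Not at hpos
    have hzero : ∀ t ∈ W, M t = 0 := fun t ht => le_antisymm (hpos t ht) (hM t ht)
    rw [sum_eq_zero fun t ht => by rw [hzero t ht, Real.zero_rpow hpq.pos.ne'],
      sum_eq_zero fun t ht => by rw [hzero t ht, Real.zero_rpow hpq.sub_one_pos.ne', mul_zero],
      mul_zero]
  have hW : W.Nonempty := hpos.imp fun t ht => ht.1
  obtain ⟨t₁, ht₁, hct₁⟩ := exists_mem_eq_sup' hW M
  set c := W.sup' hW M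
  have hle_c : ∀ t ∈ W, M t ≤ c := fun t ht => le_sup' M ht
  have hc : 0 < c := by obtain ⟨t, ht, htpos⟩ := hpos; exact htpos.trans_le (hle_c t ht)
  set L := insert 0 {x ∈ W.image M | x < c}
  set c' := L.max' (insert_nonempty _ _)
  have hc' : 0 ≤ c' := le_max' L 0 (mem_insert_self _ _)
  have hc'c : c' < c := (max'_lt_iff _ _).2 fun x hx => by
    rcases mem_insert.1 hx with rfl | hx
    · exact hc
    · exact (mem_filter.1 hx).2
  have hle_c' : ∀ t ∈ W, M t < c → M t ≤ c' := fun t ht hlt =>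
    le_max' L _ (mem_insert_of_mem (mem_filter.2 ⟨mem_image_of_mem M ht, hlt⟩))
  have hc'_mem : c' = 0 ∨ c' ∈ W.image M :=
    (mem_insert.1 (max'_mem L _)).imp_right fun h => (mem_filter.1 h).1
  have hcard := card_filter_image_min_lt (hct₁ ▸ mem_image_of_mem M ht₁) hc hc'c hle_c' hc'_mem
  have ih' := ih _ (hn ▸ hcard) (fun t ht => le_min (hM t ht) hc') (hMg.min_const c') rfl
  have hstep := hMg.sum_rpow_sub_sum_min_rpow_le hpq hc hc' hc'c hle_c hle_c'
  rw [mul_sub] at hstep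
  linarith

end LayerCake

theorem le_of_le_sum_mul_of_sum_rpow_le {τ : Type*} {W : Finset τ} {a b : τ → ℝ} {p q C X : ℝ}
    (hpq : p.HolderConjugate q) (ha : ∀ t ∈ W, 0 ≤ a t) (hb : ∀ t ∈ W, 0 ≤ b t) (hC : 0 ≤ C)
    (hX : 0 ≤ X) (hXab : X ≤ ∑ t ∈ W, a t * b t) (hbX : ∑ t ∈ W, b t ^ q ≤ C * X) :
    X ≤ C ^ (p - 1) * ∑ t ∈ W, a t ^ p := by
  set S := ∑ t ∈ W, a t ^ p
  have hS : 0 ≤ S := sum_nonneg fun t ht => Real.rpow_nonneg (ha t ht) p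
  rcases hX.eq_or_lt with rfl | hXpos
  · positivity
  have hp := hpq.pos
  have hq := hpq.symm.pos
  have hholder : X ^ (1 / p) * X ^ (1 / q) ≤ (S ^ (1 / p) * C ^ (1 / q)) * X ^ (1 / q) := by
    calc X ^ (1 / p) * X ^ (1 / q) = X := by
          rw [← Real.rpow_add hXpos, one_div, one_div, hpq.inv_add_inv_eq_one, Real.rpow_one]
      _ ≤ S ^ (1 / p) * (∑ t ∈ W, b t ^ q) ^ (1 / q) :=
          hXab.trans (Real.inner_le_Lp_mul_Lq_of_nonneg W hpq ha hb)
      _ ≤ S ^ (1 / p) * (C * X) ^ (1 / q) := by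
          gcongr
          exact sum_nonneg fun t ht => Real.rpow_nonneg (hb t ht) q
      _ = (S ^ (1 / p) * C ^ (1 / q)) * X ^ (1 / q) := by rw [Real.mul_rpow hC hX, mul_assoc]
  have hXp := le_of_mul_le_mul_right hholder (Real.rpow_pos_of_pos hXpos _)
  calc X = (X ^ (1 / p)) ^ p := by
        rw [← Real.rpow_mul hX, one_div_mul_cancel hp.ne', Real.rpow_one]
    _ ≤ (S ^ (1 / p) * C ^ (1 / q)) ^ p := by gcongr
    _ = C ^ (p - 1) * S := by
        rw [Real.mul_rpow (by positivity) (by positivity), ← Real.rpow_mul hS, ← Real.rpow_mul hC,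
          one_div_mul_cancel hp.ne', Real.rpow_one, one_div_mul_eq_div, hpq.div_conj_eq_sub_one,
          mul_comm]

section MaximalInequality

variable {p q : ℝ} {g : ℤ → ℝ}

theorem sum_fwdMaxAvg_rpow_le (hpq : p.HolderConjugate q) (hg : ∀ u, 0 ≤ g u) (A E : ℤ) :
    ∑ t ∈ Ico A E, fwdMaxAvg E g t ^ p ≤ q ^ p * ∑ t ∈ Ico A E, g t ^ p := by
  set M := fwdMaxAvg E g
  have hM : ∀ t, 0 ≤ M t := fwdMaxAvg_nonneg E g
  have hlayer := (superlevelBound_fwdMaxAvg A E g).sum_rpow_le hpq fun t _ => hM t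
  have key := le_of_le_sum_mul_of_sum_rpow_le hpq (a := fun t => q * g t)
    (b := fun t => M t ^ (p - 1)) (C := 1) (fun t _ => mul_nonneg hpq.symm.pos.le (hg t))
    (fun t _ => Real.rpow_nonneg (hM t) _) zero_le_one
    (sum_nonneg fun t _ => Real.rpow_nonneg (hM t) _)
    (by simpa only [mul_sum, mul_assoc] using hlayer)
    (by simp only [← Real.rpow_mul (hM _), hpq.sub_one_mul_conj, one_mul, le_refl])
  simpa only [Real.one_rpow, one_mul, Real.mul_rpow hpq.symm.pos.le (hg _), ← mul_sum] using key

/-- The largest average of `g` over a window `[a, s)` with `A ≤ a`: the forward maximal average of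
`g` reflected by `u ↦ -1 - u`. -/
noncomputable def bwdMaxAvg (A : ℤ) (g : ℤ → ℝ) (s : ℤ) : ℝ :=
  fwdMaxAvg (-A) (fun v => g (-1 - v)) (-s)

theorem bwdMaxAvg_nonneg (A : ℤ) (g : ℤ → ℝ) (s : ℤ) : 0 ≤ bwdMaxAvg A g s :=
  fwdMaxAvg_nonneg _ _ _

theorem sum_Ico_eq_sum_Ico_reflect (g : ℤ → ℝ) (a b : ℤ) :
    ∑ u ∈ Ico a b, g u = ∑ v ∈ Ico (-b) (-a), g (-1 - v) :=
  sum_nbij' (fun u => -1 - u) (fun v => -1 - v) (fun u hu => by simp at hu ⊢; omega)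
    (fun v hv => by simp at hv ⊢; omega) (fun u _ => by ring) (fun v _ => by ring)
    (fun u _ => by ring_nf)

theorem sum_Ico_le_mul_bwdMaxAvg {A a s : ℤ} (hAa : A ≤ a) (has : a ≤ s) :
    ∑ u ∈ Ico a s, g u ≤ (s - a) * bwdMaxAvg A g s := by
  have h := sum_Ico_le_mul_fwdMaxAvg (g := fun v => g (-1 - v)) (neg_le_neg has) (neg_le_neg hAa)
  rw [sum_Ico_eq_sum_Ico_reflect, bwdMaxAvg]
  convert h using 2
  push_cast
  ring

theorem sum_bwdMaxAvg_rpow_le (hpq : p.HolderConjugate q) (hg : ∀ u, 0 ≤ g u) (A E : ℤ) :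
    ∑ t ∈ Ico A E, bwdMaxAvg A g t ^ p ≤ q ^ p * ∑ t ∈ Ico A E, g t ^ p := by
  set F := fun v => fwdMaxAvg (-A) (fun v => g (-1 - v)) v ^ p
  have hF : ∀ v, 0 ≤ F v := fun v => Real.rpow_nonneg (fwdMaxAvg_nonneg _ _ _) p
  have hneg : ∑ t ∈ Ico A E, bwdMaxAvg A g t ^ p = ∑ v ∈ Ioc (-E) (-A), F v :=
    sum_nbij' (fun t => -t) (fun v => -v) (fun t ht => by simp at ht ⊢; omega)
      (fun v hv => by simp at hv ⊢; omega) (fun t _ => neg_neg t) (fun v _ => neg_neg v)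
      (fun t _ => rfl)
  -- the reflected window gains the point `-A`, where the forward maximal average vanishes
  have hsub : ∑ v ∈ Ioc (-E) (-A), F v ≤ ∑ v ∈ Ico (-E) (-A), F v := by
    calc ∑ v ∈ Ioc (-E) (-A), F v ≤ ∑ v ∈ insert (-A) (Ico (-E) (-A)), F v :=
          sum_le_sum_of_subset_of_nonneg (fun v hv => by simp at hv ⊢; omega) fun v _ _ => hF v
      _ = ∑ v ∈ Ico (-E) (-A), F v := by
          rw [sum_insert (by simp), show F (-A) = 0 by simp [F, fwdMaxAvg_self, hpq.pos.ne'],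
            zero_add]
  rw [hneg, sum_Ico_eq_sum_Ico_reflect (fun u => g u ^ p)]
  exact hsub.trans (sum_fwdMaxAvg_rpow_le hpq (fun u => hg _) (-E) (-A))

theorem sum_Ico_le_mul_max_fwdMaxAvg_bwdMaxAvg {A E a s b : ℤ} (hAa : A ≤ a) (has : a ≤ s)
    (hsb : s ≤ b) (hbE : b ≤ E) :
    ∑ u ∈ Ico a b, g u ≤ (b - a) * max (fwdMaxAvg E g s) (bwdMaxAvg A g s) := by
  rw [← Ico_union_Ico_eq_Ico has hsb, sum_union (Ico_disjoint_Ico_consecutive a s b)]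
  have has' : (0 : ℝ) ≤ s - a := sub_nonneg.2 (Int.cast_le.2 has)
  have hsb' : (0 : ℝ) ≤ b - s := sub_nonneg.2 (Int.cast_le.2 hsb)
  calc ∑ u ∈ Ico a s, g u + ∑ u ∈ Ico s b, g u
      ≤ (s - a) * bwdMaxAvg A g s + (b - s) * fwdMaxAvg E g s :=
        add_le_add (sum_Ico_le_mul_bwdMaxAvg hAa has) (sum_Ico_le_mul_fwdMaxAvg hsb hbE)
    _ ≤ (s - a) * max (fwdMaxAvg E g s) (bwdMaxAvg A g s)
        + (b - s) * max (fwdMaxAvg E g s) (bwdMaxAvg A g s) := by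
        gcongr
        exacts [le_max_right _ _, le_max_left _ _]
    _ = (b - a) * max (fwdMaxAvg E g s) (bwdMaxAvg A g s) := by ring

theorem sum_max_fwdMaxAvg_bwdMaxAvg_rpow_le (hpq : p.HolderConjugate q) (hg : ∀ u, 0 ≤ g u)
    (A E : ℤ) :
    ∑ t ∈ Ico A E, max (fwdMaxAvg E g t) (bwdMaxAvg A g t) ^ p ≤
      2 * q ^ p * ∑ t ∈ Ico A E, g t ^ p := by
  calc ∑ t ∈ Ico A E, max (fwdMaxAvg E g t) (bwdMaxAvg A g t) ^ p
      ≤ ∑ t ∈ Ico A E, (fwdMaxAvg E g t ^ p + bwdMaxAvg A g t ^ p) := by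
        refine sum_le_sum fun t _ => ?_
        rw [Real.rpow_max (fwdMaxAvg_nonneg E g t) (bwdMaxAvg_nonneg A g t) hpq.pos.le]
        exact max_le_add_of_nonneg (Real.rpow_nonneg (fwdMaxAvg_nonneg E g t) p)
          (Real.rpow_nonneg (bwdMaxAvg_nonneg A g t) p)
    _ ≤ q ^ p * ∑ t ∈ Ico A E, g t ^ p + q ^ p * ∑ t ∈ Ico A E, g t ^ p := by
        rw [sum_add_distrib]
        exact add_le_add (sum_fwdMaxAvg_rpow_le hpq hg A E) (sum_bwdMaxAvg_rpow_le hpq hg A E)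
    _ = 2 * q ^ p * ∑ t ∈ Ico A E, g t ^ p := by ring

end MaximalInequality

section Schedule

variable {ι : Type*} [Fintype ι]

theorem sum_Ico_sum_ite_mul (a b : ι → ℤ) (c : ι → ℝ) (f : ℤ → ℝ) {A E : ℤ}
    (hab : ∀ i, A ≤ a i ∧ b i ≤ E) :
    ∑ t ∈ Ico A E, (∑ i, if a i ≤ t ∧ t < b i then c i else 0) * f t =
      ∑ i, c i * ∑ t ∈ Ico (a i) (b i), f t := by
  simp_rw [sum_mul, ite_mul, zero_mul]
  rw [sum_comm]
  refine sum_congr rfl fun i _ => ?_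
  rw [← sum_filter, mul_sum]
  congr 1
  ext t
  simp only [mem_filter, mem_Ico]
  have := hab i
  omega

theorem tsum_sum_ite_rpow {a b : ι → ℤ} {c : ι → ℝ} {A E : ℤ} (hab : ∀ i, A ≤ a i ∧ b i ≤ E)
    {α : ℝ} (hα : α ≠ 0) :
    ∑' t : ℤ, (∑ i, if a i ≤ t ∧ t < b i then c i else 0) ^ α =
      ∑ t ∈ Ico A E, (∑ i, if a i ≤ t ∧ t < b i then c i else 0) ^ α := by
  refine tsum_eq_sum fun t ht => ?_
  rw [sum_eq_zero fun i _ => if_neg fun hi => ht (mem_Ico.2 ?_), Real.zero_rpow hα]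
  have := hab i
  omega

theorem den_nonneg {J : Job} (hJ : J.Valid) : 0 ≤ den J := by
  obtain ⟨hw, hh, hrd⟩ := hJ
  have hw' : (0 : ℝ) ≤ J.w := by exact_mod_cast (by omega : (0 : ℤ) ≤ J.w)
  have hD : (0 : ℝ) ≤ J.d - J.r := sub_nonneg.2 (Int.cast_le.2 (by omega))
  exact div_nonneg (mul_nonneg hw' hh.le) hD

theorem avg_nonneg {job : ι → Job} (hv : ∀ i, (job i).Valid) (t : ℤ) : 0 ≤ avg job t :=
  sum_nonneg fun i _ => ite_nonneg (den_nonneg (hv i)) le_rfl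

theorem load_nonneg {job : ι → Job} (hv : ∀ i, (job i).Valid) (st : ι → ℤ) (t : ℤ) :
    0 ≤ load job st t :=
  sum_nonneg fun i _ => ite_nonneg (hv i).2.1.le le_rfl

theorem den_mul_sum_le {J : Job} (hJ : J.Valid) {st : ℤ} (hst : J.r ≤ st ∧ st + J.w ≤ J.d)
    {g H : ℤ → ℝ} (hH : ∀ s ∈ Ico J.r J.d, ∑ u ∈ Ico J.r J.d, g u ≤ (J.d - J.r) * H s) :
    den J * ∑ u ∈ Ico J.r J.d, g u ≤ J.h * ∑ s ∈ Ico st (st + J.w), H s := by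
  obtain ⟨hw, hh, hrd⟩ := hJ
  have hD : (0 : ℝ) < J.d - J.r := sub_pos.2 (Int.cast_lt.2 (by omega))
  have hcard : (#(Ico st (st + J.w)) : ℝ) = J.w := by
    rw [Int.card_Ico, add_sub_cancel_left, ← Int.cast_natCast, Int.toNat_of_nonneg (by omega)]
  have hrun : J.w * ∑ u ∈ Ico J.r J.d, g u ≤ (J.d - J.r) * ∑ s ∈ Ico st (st + J.w), H s := by
    rw [← hcard, ← nsmul_eq_mul, ← sum_const, mul_sum]
    exact sum_le_sum fun s hs => hH s (by rw [mem_Ico] at hs ⊢; omega)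
  calc den J * ∑ u ∈ Ico J.r J.d, g u = J.h / (J.d - J.r) * (J.w * ∑ u ∈ Ico J.r J.d, g u) := by
        rw [den]; ring
    _ ≤ J.h / (J.d - J.r) * ((J.d - J.r) * ∑ s ∈ Ico st (st + J.w), H s) := by
        gcongr
    _ = J.h * ∑ s ∈ Ico st (st + J.w), H s := by field_simp

theorem sum_avg_mul_le_sum_load_mul {job : ι → Job} (hv : ∀ i, (job i).Valid) {st : ι → ℤ}
    (hst : Feasible job st) {A E : ℤ} (hwin : ∀ i, A ≤ (job i).r ∧ (job i).d ≤ E)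
    (hrun : ∀ i, A ≤ st i ∧ st i + (job i).w ≤ E) (g H : ℤ → ℝ)
    (hH : ∀ a s b : ℤ, A ≤ a → a ≤ s → s < b → b ≤ E → ∑ u ∈ Ico a b, g u ≤ (b - a) * H s) :
    ∑ t ∈ Ico A E, avg job t * g t ≤ ∑ t ∈ Ico A E, load job st t * H t := by
  simp only [avg, load]
  rw [sum_Ico_sum_ite_mul _ _ _ _ hwin, sum_Ico_sum_ite_mul _ _ _ _ hrun]
  refine sum_le_sum fun i _ => den_mul_sum_le (hv i) (hst i) fun s hs => ?_
  rw [mem_Ico] at hs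
  exact hH _ _ _ (hwin i).1 hs.1 hs.2 (hwin i).2

theorem sum_avg_rpow_le_sum_load_rpow {job : ι → Job} (hv : ∀ i, (job i).Valid)
    {st : ι → ℤ} (hst : Feasible job st) {A E : ℤ} (hwin : ∀ i, A ≤ (job i).r ∧ (job i).d ≤ E)
    (hrun : ∀ i, A ≤ st i ∧ st i + (job i).w ≤ E) {α q : ℝ} (hαq : α.HolderConjugate q) :
    ∑ t ∈ Ico A E, avg job t ^ α ≤ (2 * α ^ q) ^ (α - 1) * ∑ t ∈ Ico A E, load job st t ^ α := by
  set g : ℤ → ℝ := fun t => avg job t ^ (α - 1)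
  set H : ℤ → ℝ := fun s => max (fwdMaxAvg E g s) (bwdMaxAvg A g s)
  have hdual : ∑ t ∈ Ico A E, avg job t ^ α ≤ ∑ t ∈ Ico A E, load job st t * H t := by
    calc ∑ t ∈ Ico A E, avg job t ^ α = ∑ t ∈ Ico A E, avg job t * g t := by
          refine sum_congr rfl fun t _ => ?_
          rw [← Real.rpow_one_add' (avg_nonneg hv t) (by linarith [hαq.pos]), add_sub_cancel]
      _ ≤ _ := sum_avg_mul_le_sum_load_mul hv hst hwin hrun g H
          fun a s b hAa has hsb hbE => sum_Ico_le_mul_max_fwdMaxAvg_bwdMaxAvg hAa has hsb.le hbE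
  have hHq : ∑ t ∈ Ico A E, H t ^ q ≤ 2 * α ^ q * ∑ t ∈ Ico A E, avg job t ^ α := by
    have hgq : ∀ t, g t ^ q = avg job t ^ α := fun t => by
      rw [← Real.rpow_mul (avg_nonneg hv t), hαq.sub_one_mul_conj]
    have h := sum_max_fwdMaxAvg_bwdMaxAvg_rpow_le hαq.symm (g := g)
      (fun u => Real.rpow_nonneg (avg_nonneg hv u) _) A E
    rwa [sum_congr rfl fun t _ => hgq t] at h
  exact le_of_le_sum_mul_of_sum_rpow_le hαq (fun t _ => load_nonneg hv st t)
    (fun t _ => le_max_of_le_left (fwdMaxAvg_nonneg E g t))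
    (mul_nonneg zero_le_two (Real.rpow_nonneg hαq.pos.le q))
    (sum_nonneg fun t _ => Real.rpow_nonneg (avg_nonneg hv t) α) hdual hHq

end Schedule

theorem stmt1 {ι : Type*} [Fintype ι] (α : ℝ) (hα : 1 < α)
    (job : ι → Job) (hv : ∀ i, (job i).Valid)
    (st : ι → ℤ) (hst : Feasible job st) :
    ∑' t : ℤ, avg job t ^ α ≤ ((2 * α) ^ α / 2) * cost α job st := by
  obtain ⟨A, hA⟩ := Finite.exists_ge fun i => (job i).r
  obtain ⟨E, hE⟩ := Finite.exists_le fun i => (job i).d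
  have hwin : ∀ i, A ≤ (job i).r ∧ (job i).d ≤ E := fun i => ⟨hA i, hE i⟩
  have hrun : ∀ i, A ≤ st i ∧ st i + (job i).w ≤ E := fun i =>
    ⟨(hA i).trans (hst i).1, (hst i).2.trans (hE i)⟩
  have hαq := Real.HolderConjugate.conjExponent hα
  have hα0 : α ≠ 0 := hαq.ne_zero
  have hconst : (2 * α ^ α.conjExponent) ^ (α - 1) = (2 * α) ^ α / 2 := by
    rw [Real.mul_rpow zero_le_two (by positivity), ← Real.rpow_mul hαq.pos.le,
      mul_comm _ (α - 1), hαq.sub_one_mul_conj, Real.mul_rpow zero_le_two hαq.pos.le,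
      Real.rpow_sub_one two_ne_zero]
    ring
  rw [cost, ← hconst]
  simp only [avg, load, tsum_sum_ite_rpow hwin hα0, tsum_sum_ite_rpow hrun hα0]
  exact sum_avg_rpow_le_sum_load_rpow hv hst hwin hrun hαq
end

section
/- Let w ≥ 1 be an integer and let 𝒥 be a finite job set in which every job has width exactly w. Let S and S' be two schedules of 𝒥 (assignments of integer start times st(S,J) and st(S',J) to every job) such that |st(S',J) − st(S,J)| ≤ w − 1 for every J ∈ 𝒥. Then for every timeslot t ∈ ℤ, ℓ(S',t) ≤ ℓ(S,t) + ℓ(S, t−(w−1)) + ℓ(S, t+(w−1)). -/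
open scoped BigOperators NNReal

theorem stmt4 {ι : Type*} [Fintype ι] (w : ℤ) (hw : 1 ≤ w)
    (job : ι → Job) (hh : ∀ i, 0 < (job i).h) (huw : ∀ i, (job i).w = w)
    (st st' : ι → ℤ) (hshift : ∀ i, |st' i - st i| ≤ w - 1) (t : ℤ) :
    load job st' t ≤
      load job st t + load job st (t - (w - 1)) + load job st (t + (w - 1)) := by
  unfold load
  rw [← Finset.sum_add_distrib, ← Finset.sum_add_distrib]
  apply Finset.sum_le_sum
  intro i _
  have hi := hh i
  have hs := hshift i
  have hwi := huw i
  rw [abs_le] at hs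
  by_cases h1 : st' i ≤ t ∧ t < st' i + (job i).w
  · rw [if_pos h1]
    have hcase : (st i ≤ t ∧ t < st i + (job i).w) ∨
        (st i ≤ t - (w - 1) ∧ t - (w - 1) < st i + (job i).w) ∨
        (st i ≤ t + (w - 1) ∧ t + (w - 1) < st i + (job i).w) := by omega
    rcases hcase with h | h | h <;> split_ifs <;> first | linarith | omega
  · rw [if_neg h1]
    split_ifs <;> linarith
end

section
/- Let p ≥ 1 be an integer and let 𝒥 be a finite job set in which every job J has width 2^{p−1} < w(J) ≤ 2^p. Let st, st* : 𝒥 → ℤ be two assignments of start times such that st(J) − (2^{p−1} − 1) ≤ st*(J) ≤ st(J) for every J. Define ℓ(t) = Σ_{J : st(J) ≤ t < st(J)+w(J)} h(J) and ℓ*(t) = Σ_{J : st*(J) ≤ t < st*(J)+2^p} h(J), i.e. in the second schedule every job runs for exactly 2^p timeslots starting at st*(J). Then for every t ∈ ℤ, ℓ*(t) ≤ ℓ(t) + ℓ(t − (2^{p−1} − 1)) + ℓ(t + (2^{p−1} − 1)). -/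
open scoped BigOperators NNReal

theorem stmt6 {ι : Type*} [Fintype ι] (p : ℕ) (hp : 1 ≤ p)
    (job : ι → Job) (hh : ∀ i, 0 < (job i).h)
    (hw : ∀ i, (2 : ℤ) ^ (p - 1) < (job i).w ∧ (job i).w ≤ (2 : ℤ) ^ p)
    (st st' : ι → ℤ)
    (hshift : ∀ i, st i - ((2 : ℤ) ^ (p - 1) - 1) ≤ st' i ∧ st' i ≤ st i) (t : ℤ) :
    (∑ i, if st' i ≤ t ∧ t < st' i + (2 : ℤ) ^ p then (job i).h else 0) ≤
      load job st t + load job st (t - ((2 : ℤ) ^ (p - 1) - 1))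
        + load job st (t + ((2 : ℤ) ^ (p - 1) - 1)) := by
  unfold load
  rw [← Finset.sum_add_distrib, ← Finset.sum_add_distrib]
  apply Finset.sum_le_sum
  intro i _
  have hq : (1:ℤ) ≤ 2 ^ (p-1) := one_le_pow₀ (by norm_num)
  have h2 : (2:ℤ) ^ p = 2 * 2 ^ (p-1) := by
    conv_lhs => rw [show p = (p-1)+1 from (Nat.succ_pred_eq_of_pos hp).symm]
    ring
  have hwi := hw i
  have hsi := hshift i
  have hhi := (hh i).le
  set q := (2:ℤ) ^ (p-1) with hqq
  rw [h2] at *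
  split_ifs with h1 h2' h3 h4 h3 h4 <;> try linarith
  all_goals (exfalso; omega)
end

section
/- Let w ≥ 1 be an integer and let 𝒥 be a finite job set in which every job J has width w(J) = w and feasible-interval length d(J) − r(J) > 2w (a 'loose' uniform-width job set). Define the aligned job set 𝒥' by replacing each J ∈ 𝒥 with the job J' having the same width w and height h(J), release time r(J') = w·⌈r(J)/w⌉ (the smallest multiple of w that is ≥ r(J)) and deadline d(J') = w·⌊d(J)/w⌋ (the largest multiple of w that is ≤ d(J)). Then 𝒥' admits a feasible schedule, and OPT(𝒥') ≤ 3^α · OPT(𝒥). -/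
open scoped BigOperators NNReal

/-! ### Auxiliary lemmas -/

lemma ediv_bounds (w a : ℤ) (hw : 1 ≤ w) :
    a - w + 1 ≤ w * (a.ediv w) ∧ w * (a.ediv w) ≤ a := by
  have h1 : w * (a.ediv w) + a.emod w = a := Int.mul_ediv_add_emod a w
  have h2 : 0 ≤ a.emod w := Int.emod_nonneg a (show w ≠ 0 by omega)
  have h3 : a.emod w < w := Int.emod_lt_of_pos a (show 0 < w by omega)
  constructor <;> linarith

lemma gap_lemma (w r d : ℤ) (hw : 1 ≤ w) (hl : 2 * w < d - r) :
    w * ((r + w - 1).ediv w) + w ≤ w * (d.ediv w) := by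
  obtain ⟨k1, k2⟩ := ediv_bounds w (r + w - 1) hw
  obtain ⟨k3, k4⟩ := ediv_bounds w d hw
  have hq : 1 ≤ d.ediv w - (r + w - 1).ediv w := by
    by_contra h
    push_neg at h
    have h0 : d.ediv w - (r + w - 1).ediv w ≤ 0 := by omega
    have : w * (d.ediv w - (r + w - 1).ediv w) ≤ 0 :=
      mul_nonpos_of_nonneg_of_nonpos (by linarith) h0
    rw [mul_sub] at this
    linarith
  have h5 : w * 1 ≤ w * (d.ediv w - (r + w - 1).ediv w) :=
    mul_le_mul_of_nonneg_left hq (by linarith)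
  rw [mul_sub, mul_one] at h5
  linarith

/-- The aligned start time: round `s` down to a multiple of `w`, clamped into
the aligned window. -/
def align (w r d s : ℤ) : ℤ :=
  max (w * ((r + w - 1).ediv w)) (min (w * (s.ediv w)) (w * (d.ediv w) - w))

lemma align_spec (w r d s : ℤ) (hw : 1 ≤ w) (hr : r ≤ s) (hd : s + w ≤ d)
    (hl : 2 * w < d - r) :
    w * ((r + w - 1).ediv w) ≤ align w r d s ∧
      align w r d s + w ≤ w * (d.ediv w) ∧
      s - w < align w r d s ∧ align w r d s < s + w := by
  obtain ⟨k1, k2⟩ := ediv_bounds w (r + w - 1) hw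
  obtain ⟨k3, k4⟩ := ediv_bounds w d hw
  obtain ⟨k5, k6⟩ := ediv_bounds w s hw
  have hg := gap_lemma w r d hw hl
  unfold align
  refine ⟨le_max_left _ _, ?_, ?_, ?_⟩
  · have h1 : min (w * (s.ediv w)) (w * (d.ediv w) - w) ≤ w * (d.ediv w) - w :=
      min_le_right _ _
    have h2 : max (w * ((r + w - 1).ediv w)) (min (w * (s.ediv w)) (w * (d.ediv w) - w)) ≤
        w * (d.ediv w) - w := max_le (by linarith) h1
    linarith
  · have h1 : s - w < min (w * (s.ediv w)) (w * (d.ediv w) - w) :=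
      lt_min (by linarith) (by linarith)
    exact lt_of_lt_of_le h1 (le_max_right _ _)
  · exact max_lt (by linarith) (lt_of_le_of_lt (min_le_left _ _) (by linarith))

lemma ite_le_three {h : ℝ} (hh : 0 ≤ h) {P A B C : Prop}
    [Decidable P] [Decidable A] [Decidable B] [Decidable C]
    (himp : P → A ∨ B ∨ C) :
    (if P then h else 0) ≤
      (if A then h else 0) + (if B then h else 0) + (if C then h else 0) := by
  have hA : 0 ≤ (if A then h else 0) := by split_ifs <;> simp [hh]
  have hB : 0 ≤ (if B then h else 0) := by split_ifs <;> simp [hh]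
  have hC : 0 ≤ (if C then h else 0) := by split_ifs <;> simp [hh]
  by_cases hp : P
  · rcases himp hp with h1 | h1 | h1
    · rw [if_pos hp, if_pos h1]; linarith
    · rw [if_pos hp, if_pos h1]; linarith
    · rw [if_pos hp, if_pos h1]; linarith
  · rw [if_neg hp]; linarith

lemma sum3_rpow {a b c α : ℝ} (ha : 0 ≤ a) (hb : 0 ≤ b) (hc : 0 ≤ c) (hα : 1 ≤ α) :
    (a + b + c) ^ α ≤ 3 ^ (α - 1) * (a ^ α + b ^ α + c ^ α) := by
  have h3 : (0 : ℝ) < 3 := by norm_num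
  have key := Real.rpow_arith_mean_le_arith_mean_rpow (Finset.univ : Finset (Fin 3))
    (fun _ => (3 : ℝ)⁻¹) ![3 * a, 3 * b, 3 * c] (fun i _ => by norm_num)
    (by norm_num [Fin.sum_univ_three])
    (fun i _ => by fin_cases i <;> simp <;> positivity) hα
  simp only [Fin.sum_univ_three, Matrix.cons_val_zero, Matrix.cons_val_one,
    Matrix.head_cons, Matrix.cons_val_two, Matrix.tail_cons] at key
  have e1 : (3 * a) ^ α = 3 ^ α * a ^ α := Real.mul_rpow (by norm_num) ha
  have e2 : (3 * b) ^ α = 3 ^ α * b ^ α := Real.mul_rpow (by norm_num) hb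
  have e3 : (3 * c) ^ α = 3 ^ α * c ^ α := Real.mul_rpow (by norm_num) hc
  have e0 : (3 : ℝ)⁻¹ * (3 * a) + 3⁻¹ * (3 * b) + 3⁻¹ * (3 * c) = a + b + c := by ring
  rw [e0, e1, e2, e3] at key
  have e4 : (3 : ℝ) ^ (α - 1) = 3 ^ α / 3 := by
    rw [Real.rpow_sub h3, Real.rpow_one]
  rw [e4]
  calc (a + b + c) ^ α ≤ 3⁻¹ * (3 ^ α * a ^ α) + 3⁻¹ * (3 ^ α * b ^ α)
        + 3⁻¹ * (3 ^ α * c ^ α) := key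
    _ = 3 ^ α / 3 * (a ^ α + b ^ α + c ^ α) := by ring

theorem stmt7 {ι : Type*} [Fintype ι] (α : ℝ) (hα : 1 < α) (w : ℤ) (hw : 1 ≤ w)
    (job : ι → Job) (hv : ∀ i, (job i).Valid)
    (huw : ∀ i, (job i).w = w)
    (hloose : ∀ i, 2 * w < (job i).d - (job i).r)
    (job' : ι → Job)
    (hjob' : ∀ i, job' i =
      ⟨w * (((job i).r + w - 1).ediv w), w * ((job i).d.ediv w), w, (job i).h⟩) :
    (∃ st, Feasible job' st) ∧ OPT α job' ≤ 3 ^ α * OPT α job := by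
  have hα0 : (0 : ℝ) < α := by linarith
  have hα1 : (1 : ℝ) ≤ α := le_of_lt hα
  have hαne : α ≠ 0 := ne_of_gt hα0
  have hh : ∀ i, 0 ≤ (job i).h := fun i => le_of_lt (hv i).2.1
  have hh' : ∀ i, 0 ≤ (job' i).h := fun i => by rw [hjob' i]; exact hh i
  -- part 1: feasibility of the aligned instance
  have hfeas1 : ∃ st, Feasible job' st := by
    refine ⟨fun i => w * (((job i).r + w - 1).ediv w), fun i => ?_⟩
    rw [hjob' i]
    dsimp only
    exact ⟨le_refl _, gap_lemma w _ _ hw (hloose i)⟩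
  refine ⟨hfeas1, ?_⟩
  -- nonnegativity of loads and costs
  have hload_nonneg : ∀ (jb : ι → Job) (st : ι → ℤ), (∀ i, 0 ≤ (jb i).h) →
      ∀ t, 0 ≤ load jb st t := by
    intro jb st hhn t
    unfold load
    apply Finset.sum_nonneg
    intro i _
    split_ifs
    · exact hhn i
    · exact le_rfl
  have hcost_nonneg : ∀ (jb : ι → Job) (st : ι → ℤ), (∀ i, 0 ≤ (jb i).h) →
      0 ≤ cost α jb st := by
    intro jb st hhn
    apply tsum_nonneg
    intro t
    exact Real.rpow_nonneg (hload_nonneg jb st hhn t) α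
  have hbdd' : BddBelow {c : ℝ | ∃ st, Feasible job' st ∧ cost α job' st = c} := by
    refine ⟨0, ?_⟩
    rintro c ⟨st, _, rfl⟩
    exact hcost_nonneg job' st hh'
  -- key: for every feasible schedule of `job`, OPT job' ≤ 3^α * its cost
  have hkey : ∀ st : ι → ℤ, Feasible job st → OPT α job' ≤ 3 ^ α * cost α job st := by
    intro st hstf
    set st' : ι → ℤ := fun i => align w (job i).r (job i).d (st i) with hst'
    have hspec : ∀ i, w * (((job i).r + w - 1).ediv w) ≤ st' i ∧
        st' i + w ≤ w * ((job i).d.ediv w) ∧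
        st i - w < st' i ∧ st' i < st i + w := by
      intro i
      have h1 := (hstf i).1
      have h2 := (hstf i).2
      rw [huw i] at h2
      exact align_spec w (job i).r (job i).d (st i) hw h1 h2 (hloose i)
    have hfeas' : Feasible job' st' := by
      intro i
      rw [hjob' i]
      dsimp only
      exact ⟨(hspec i).1, (hspec i).2.1⟩
    -- load comparison
    have hload : ∀ t, load job' st' t ≤
        load job st (t - w) + load job st t + load job st (t + w) := by
      intro t
      unfold load
      rw [← Finset.sum_add_distrib, ← Finset.sum_add_distrib]
      apply Finset.sum_le_sum
      intro i _
      rw [hjob' i]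
      dsimp only
      rw [huw i]
      apply ite_le_three (hh i)
      intro hp
      have hb := (hspec i).2.2
      omega
    -- finite supports
    set F' : Finset ℤ :=
      Finset.univ.biUnion (fun i => Finset.Ico (st' i) (st' i + (job' i).w)) with hF'
    set H : Finset ℤ :=
      ((F'.image (· - w) ∪ F') ∪ F'.image (· + w)) ∪
        Finset.univ.biUnion (fun i => Finset.Ico (st i) (st i + (job i).w)) with hH
    have hsupp' : ∀ t ∉ F', load job' st' t ^ α = 0 := by
      intro t ht
      have hz : load job' st' t = 0 := by
        unfold load
        apply Finset.sum_eq_zero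
        intro i _
        rw [if_neg]
        rintro ⟨h1, h2⟩
        exact ht (Finset.mem_biUnion.mpr ⟨i, Finset.mem_univ i,
          Finset.mem_Ico.mpr ⟨h1, h2⟩⟩)
      rw [hz, Real.zero_rpow hαne]
    have hsupp : ∀ t ∉ H, load job st t ^ α = 0 := by
      intro t ht
      have hz : load job st t = 0 := by
        unfold load
        apply Finset.sum_eq_zero
        intro i _
        rw [if_neg]
        rintro ⟨h1, h2⟩
        apply ht
        rw [hH]
        apply Finset.mem_union_right
        exact Finset.mem_biUnion.mpr ⟨i, Finset.mem_univ i, Finset.mem_Ico.mpr ⟨h1, h2⟩⟩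
      rw [hz, Real.zero_rpow hαne]
    have hc' : cost α job' st' = ∑ t ∈ F', load job' st' t ^ α := tsum_eq_sum hsupp'
    have hc : cost α job st = ∑ t ∈ H, load job st t ^ α := tsum_eq_sum hsupp
    -- pointwise bound on powers
    have hpt : ∀ t, load job' st' t ^ α ≤
        3 ^ (α - 1) * (load job st (t - w) ^ α + load job st t ^ α
          + load job st (t + w) ^ α) := by
      intro t
      have ha := hload_nonneg job st hh (t - w)
      have hb := hload_nonneg job st hh t
      have hcn := hload_nonneg job st hh (t + w)
      calc load job' st' t ^ α
          ≤ (load job st (t - w) + load job st t + load job st (t + w)) ^ α :=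
            Real.rpow_le_rpow (hload_nonneg job' st' hh' t) (hload t) (le_of_lt hα0)
        _ ≤ 3 ^ (α - 1) * (load job st (t - w) ^ α + load job st t ^ α
              + load job st (t + w) ^ α) := sum3_rpow ha hb hcn hα1
    -- shifted sums are bounded by the total cost
    have hshift1 : ∑ t ∈ F', load job st (t - w) ^ α ≤ cost α job st := by
      rw [hc]
      have := Finset.sum_image (f := fun t => load job st t ^ α)
        (g := fun t : ℤ => t - w) (s := F') (by intro x _ y _ h; dsimp only at h; omega)
      rw [← this]
      apply Finset.sum_le_sum_of_subset_of_nonneg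
      · intro x hx
        rw [hH]
        exact Finset.mem_union_left _ (Finset.mem_union_left _
          (Finset.mem_union_left _ hx))
      · intro t _ _
        exact Real.rpow_nonneg (hload_nonneg job st hh t) α
    have hshift2 : ∑ t ∈ F', load job st t ^ α ≤ cost α job st := by
      rw [hc]
      apply Finset.sum_le_sum_of_subset_of_nonneg
      · intro x hx
        rw [hH]
        exact Finset.mem_union_left _ (Finset.mem_union_left _
          (Finset.mem_union_right _ hx))
      · intro t _ _
        exact Real.rpow_nonneg (hload_nonneg job st hh t) α
    have hshift3 : ∑ t ∈ F', load job st (t + w) ^ α ≤ cost α job st := by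
      rw [hc]
      have := Finset.sum_image (f := fun t => load job st t ^ α)
        (g := fun t : ℤ => t + w) (s := F') (by intro x _ y _ h; dsimp only at h; omega)
      rw [← this]
      apply Finset.sum_le_sum_of_subset_of_nonneg
      · intro x hx
        rw [hH]
        exact Finset.mem_union_left _ (Finset.mem_union_right _ hx)
      · intro t _ _
        exact Real.rpow_nonneg (hload_nonneg job st hh t) α
    -- combine
    have h3pos : (0 : ℝ) < 3 ^ (α - 1) := Real.rpow_pos_of_pos (by norm_num) _
    have hmain : cost α job' st' ≤ 3 ^ α * cost α job st := by
      have step1 : cost α job' st' ≤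
          3 ^ (α - 1) * (∑ t ∈ F', load job st (t - w) ^ α
            + ∑ t ∈ F', load job st t ^ α + ∑ t ∈ F', load job st (t + w) ^ α) := by
        rw [hc']
        calc ∑ t ∈ F', load job' st' t ^ α
            ≤ ∑ t ∈ F', 3 ^ (α - 1) * (load job st (t - w) ^ α + load job st t ^ α
                + load job st (t + w) ^ α) := Finset.sum_le_sum (fun t _ => hpt t)
          _ = 3 ^ (α - 1) * (∑ t ∈ F', load job st (t - w) ^ α
                + ∑ t ∈ F', load job st t ^ α + ∑ t ∈ F', load job st (t + w) ^ α) := by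
              rw [← Finset.mul_sum]
              congr 1
              rw [← Finset.sum_add_distrib, ← Finset.sum_add_distrib]
      have step2 : 3 ^ (α - 1) * (∑ t ∈ F', load job st (t - w) ^ α
            + ∑ t ∈ F', load job st t ^ α + ∑ t ∈ F', load job st (t + w) ^ α) ≤
          3 ^ (α - 1) * (3 * cost α job st) := by
        apply mul_le_mul_of_nonneg_left _ (le_of_lt h3pos)
        linarith
      have e4 : (3 : ℝ) ^ (α - 1) * (3 * cost α job st) = 3 ^ α * cost α job st := by
        have h5 : (3 : ℝ) ^ (α - 1) * 3 = 3 ^ α := by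
          have h6 := Real.rpow_add (show (0:ℝ) < 3 by norm_num) (α - 1) 1
          rw [Real.rpow_one] at h6
          rw [show α - 1 + 1 = α by ring] at h6
          linarith
        calc (3 : ℝ) ^ (α - 1) * (3 * cost α job st)
            = (3 ^ (α - 1) * 3) * cost α job st := by ring
          _ = 3 ^ α * cost α job st := by rw [h5]
      linarith
    calc OPT α job' ≤ cost α job' st' := csInf_le hbdd' ⟨st', hfeas', rfl⟩
      _ ≤ 3 ^ α * cost α job st := hmain
  -- conclude
  have hSne : {c : ℝ | ∃ st, Feasible job st ∧ cost α job st = c}.Nonempty :=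
    ⟨cost α job (fun i => (job i).r),
      fun i => (job i).r, fun i => ⟨le_rfl, (hv i).2.2⟩, rfl⟩
  have h3pos : (0 : ℝ) < 3 ^ α := Real.rpow_pos_of_pos (by norm_num) α
  have hdiv : OPT α job' / 3 ^ α ≤ OPT α job := by
    apply le_csInf hSne
    rintro c ⟨st, hstf, rfl⟩
    rw [div_le_iff₀ h3pos]
    calc OPT α job' ≤ 3 ^ α * cost α job st := hkey st hstf
      _ = cost α job st * 3 ^ α := by ring
  rw [div_le_iff₀ h3pos] at hdiv
  linarith
end

section
/- Let h > 0 be a real number and let J_1, …, J_k be jobs of uniform height h with agreeable deadlines, i.e. r(J_i) ≤ r(J_j) and d(J_i) ≤ d(J_j) for all i < j, each satisfying r(J_i) + w(J_i) ≤ d(J_i). If Σ_{i=1}^k den(J_i) ≤ h, i.e. Σ_{i=1}^k w(J_i)/(d(J_i) − r(J_i)) ≤ 1, then there exist integer start times s_1, …, s_k with r(J_i) ≤ s_i and s_i + w(J_i) ≤ d(J_i) for every i, such that the execution intervals [s_i, s_i + w(J_i)) are pairwise disjoint; consequently the resulting feasible schedule has load at most h at every timeslot. -/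
open scoped BigOperators NNReal

noncomputable def sched (J : ℕ → Job) : ℕ → ℤ
  | 0 => (J 0).r
  | n+1 => max (J (n+1)).r (sched J n + (J n).w)

lemma sched_ge (J : ℕ → Job) (n : ℕ) : (J n).r ≤ sched J n := by
  cases n with
  | zero => simp [sched]
  | succ m => exact le_max_left _ _

lemma sched_step (J : ℕ → Job) (n : ℕ) : sched J n + (J n).w ≤ sched J (n+1) :=
  le_max_right _ _

lemma sched_chain (J : ℕ → Job) (hw : ∀ n, 0 ≤ (J n).w) :
    ∀ m n, m < n → sched J m + (J m).w ≤ sched J n := by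
  intro m n h
  induction n with
  | zero => omega
  | succ p ih =>
    rcases Nat.lt_succ_iff_lt_or_eq.mp h with h' | h'
    · exact le_trans (ih h')
        (le_trans (le_add_of_nonneg_right (hw p)) (sched_step J p))
    · subst h'; exact sched_step J m

lemma sched_eq (J : ℕ → Job) (n : ℕ) :
    ∃ j ≤ n, sched J n = (J j).r + ∑ l ∈ Finset.Ico j n, (J l).w := by
  induction n with
  | zero => exact ⟨0, le_rfl, by simp [sched]⟩
  | succ p ih =>
    obtain ⟨j, hj, hje⟩ := ih
    rcases le_or_gt ((J (p+1)).r) (sched J p + (J p).w) with hc | hc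
    · refine ⟨j, hj.trans (Nat.le_succ p), ?_⟩
      have hm : sched J (p+1) = sched J p + (J p).w := max_eq_right hc
      rw [hm, hje, Finset.sum_Ico_succ_top hj, add_assoc]
    · refine ⟨p+1, le_rfl, ?_⟩
      have hm : sched J (p+1) = (J (p+1)).r := max_eq_left hc.le
      simp [hm]

theorem stmt12 (h : ℝ) (hh : 0 < h) (k : ℕ) (job : Fin k → Job)
    (hv : ∀ i, (job i).Valid) (hunif : ∀ i, (job i).h = h)
    (hagree : ∀ i j : Fin k, i < j → (job i).r ≤ (job j).r ∧ (job i).d ≤ (job j).d)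
    (hden : ∑ i, ((job i).w : ℝ) / (((job i).d : ℝ) - ((job i).r : ℝ)) ≤ 1) :
    ∃ s : Fin k → ℤ,
      (∀ i, (job i).r ≤ s i ∧ s i + (job i).w ≤ (job i).d) ∧
      (∀ i j, i ≠ j → ∀ t : ℤ,
        ¬((s i ≤ t ∧ t < s i + (job i).w) ∧ (s j ≤ t ∧ t < s j + (job j).w))) ∧
      (∀ t : ℤ, load job s t ≤ h) := by
  rcases Nat.eq_zero_or_pos k with hk | hk
  · subst hk
    refine ⟨fun i => i.elim0, fun i => i.elim0, fun i => i.elim0, fun t => ?_⟩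
    simp [load]
    exact hh.le
  -- extend jobs to ℕ
  set J : ℕ → Job := fun n => job ⟨min n (k-1), by omega⟩ with hJdef
  have hJ : ∀ (n : ℕ) (hn : n < k), J n = job ⟨n, hn⟩ := by
    intro n hn
    have : min n (k-1) = n := by omega
    simp [hJdef, this]
  have hv' : ∀ n, (J n).Valid := fun n => hv _
  have hw : ∀ n, 0 ≤ (J n).w := fun n => le_trans zero_le_one (hv' n).1
  have hagree' : ∀ a b : ℕ, a ≤ b → (hb : b < k) →
      (J a).r ≤ (J b).r ∧ (J a).d ≤ (J b).d := by
    intro a b hab hb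
    rcases eq_or_lt_of_le hab with rfl | hab
    · exact ⟨le_rfl, le_rfl⟩
    · have ha : a < k := hab.trans hb
      rw [hJ a ha, hJ b hb]
      exact hagree ⟨a, ha⟩ ⟨b, hb⟩ hab
  set s : Fin k → ℤ := fun i => sched J i.val with hsdef
  -- feasibility
  have hfeas : ∀ i : Fin k, (job i).r ≤ s i ∧ s i + (job i).w ≤ (job i).d := by
    intro i
    have hJi : J i.val = job i := by rw [hJ i.val i.isLt]
    constructor
    · rw [← hJi]; exact sched_ge J i.val
    · obtain ⟨j, hj, hje⟩ := sched_eq J i.val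
      have hkey : sched J i.val + (J i.val).w
          = (J j).r + ∑ l ∈ Finset.Ico j (i.val + 1), (J l).w := by
        rw [hje, Finset.sum_Ico_succ_top hj, add_assoc]
      -- real-number density argument
      have hDpos : (0:ℝ) < ((J i.val).d : ℝ) - ((J j).r : ℝ) := by
        have h1 := (hagree' j i.val hj i.isLt).1
        have h2 := (hv' i.val).1
        have h3 := (hv' i.val).2.2
        have : (J j).r < (J i.val).d := by omega
        have : ((J j).r : ℝ) < ((J i.val).d : ℝ) := by exact_mod_cast this
        linarith
      have hsum1 : ∑ l ∈ Finset.Ico j (i.val + 1),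
          ((J l).w : ℝ) / (((J i.val).d : ℝ) - ((J j).r : ℝ))
          ≤ ∑ l ∈ Finset.Ico j (i.val + 1),
          ((J l).w : ℝ) / (((J l).d : ℝ) - ((J l).r : ℝ)) := by
        apply Finset.sum_le_sum
        intro l hl
        simp only [Finset.mem_Ico] at hl
        have hlk : l < k := by omega
        have hr : (J j).r ≤ (J l).r := (hagree' j l hl.1 hlk).1
        have hd : (J l).d ≤ (J i.val).d :=
          (hagree' l i.val (by omega) i.isLt).2
        have hpos : (0:ℝ) < ((J l).d : ℝ) - ((J l).r : ℝ) := by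
          have h2 := (hv' l).1
          have h3 := (hv' l).2.2
          have : ((J l).r : ℝ) < ((J l).d : ℝ) := by exact_mod_cast (by omega : (J l).r < (J l).d)
          linarith
        have hwl : (0:ℝ) ≤ ((J l).w : ℝ) := by exact_mod_cast hw l
        have hle : ((J l).d : ℝ) - ((J l).r : ℝ)
            ≤ ((J i.val).d : ℝ) - ((J j).r : ℝ) := by
          have hr' : ((J j).r : ℝ) ≤ ((J l).r : ℝ) := by exact_mod_cast hr
          have hd' : ((J l).d : ℝ) ≤ ((J i.val).d : ℝ) := by exact_mod_cast hd
          linarith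
        gcongr
      have hsum2 : ∑ l ∈ Finset.Ico j (i.val + 1),
          ((J l).w : ℝ) / (((J l).d : ℝ) - ((J l).r : ℝ)) ≤ 1 := by
        have hsub : Finset.Ico j (i.val + 1) ⊆ Finset.range k := by
          intro l hl
          simp only [Finset.mem_Ico] at hl
          simp only [Finset.mem_range]
          omega
        have h0 : ∀ l ∈ Finset.range k, l ∉ Finset.Ico j (i.val + 1) →
            (0:ℝ) ≤ ((J l).w : ℝ) / (((J l).d : ℝ) - ((J l).r : ℝ)) := by
          intro l _ _
          have hpos : (0:ℝ) < ((J l).d : ℝ) - ((J l).r : ℝ) := by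
            have h2 := (hv' l).1
            have h3 := (hv' l).2.2
            have : ((J l).r : ℝ) < ((J l).d : ℝ) := by
              exact_mod_cast (by omega : (J l).r < (J l).d)
            linarith
          have hwl : (0:ℝ) ≤ ((J l).w : ℝ) := by exact_mod_cast hw l
          positivity
        refine le_trans (Finset.sum_le_sum_of_subset_of_nonneg hsub h0) ?_
        calc ∑ l ∈ Finset.range k,
              ((J l).w : ℝ) / (((J l).d : ℝ) - ((J l).r : ℝ))
              = ∑ i : Fin k, ((job i).w : ℝ) / (((job i).d : ℝ) - ((job i).r : ℝ)) := by
                rw [← Fin.sum_univ_eq_sum_range]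
                apply Finset.sum_congr rfl
                intro x _
                rw [hJ x.val x.isLt]
            _ ≤ 1 := hden
      have hW : ((∑ l ∈ Finset.Ico j (i.val + 1), (J l).w : ℤ) : ℝ)
          ≤ ((J i.val).d : ℝ) - ((J j).r : ℝ) := by
        have hdiv : (∑ l ∈ Finset.Ico j (i.val + 1), ((J l).w : ℝ))
            / (((J i.val).d : ℝ) - ((J j).r : ℝ)) ≤ 1 := by
          rw [← Finset.sum_div] at hsum1
          exact hsum1.trans hsum2
        have := (div_le_one hDpos).1 hdiv
        push_cast
        exact this
      have hWint : (∑ l ∈ Finset.Ico j (i.val + 1), (J l).w)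
          ≤ (J i.val).d - (J j).r := by
        have := hW
        push_cast at this
        exact_mod_cast (by push_cast; linarith : ((∑ l ∈ Finset.Ico j (i.val + 1), (J l).w : ℤ) : ℝ) ≤ (((J i.val).d - (J j).r : ℤ) : ℝ))
      have : s i + (job i).w ≤ (job i).d := by
        have : sched J i.val + (J i.val).w ≤ (J i.val).d := by
          rw [hkey]; omega
        rwa [hJi] at this
      exact this
  have hdisj : ∀ i j : Fin k, i ≠ j → ∀ t : ℤ,
      ¬((s i ≤ t ∧ t < s i + (job i).w) ∧ (s j ≤ t ∧ t < s j + (job j).w)) := by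
    have key : ∀ i j : Fin k, i < j → ∀ t : ℤ,
        ¬((s i ≤ t ∧ t < s i + (job i).w) ∧ (s j ≤ t ∧ t < s j + (job j).w)) := by
      rintro i j hij t ⟨⟨_, h2⟩, ⟨h3, _⟩⟩
      have hJi : J i.val = job i := by rw [hJ i.val i.isLt]
      have hchain := sched_chain J hw i.val j.val hij
      rw [hJi] at hchain
      simp only [hsdef] at h2 h3
      omega
    intro i j hne t ht
    rcases lt_or_gt_of_ne hne with hlt | hgt
    · exact key i j hlt t ht
    · exact key j i hgt t ⟨ht.2, ht.1⟩
  refine ⟨s, hfeas, hdisj, ?_⟩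
  intro t
  unfold load
  by_cases hex : ∃ i : Fin k, s i ≤ t ∧ t < s i + (job i).w
  · obtain ⟨i0, hi0⟩ := hex
    rw [Finset.sum_eq_single i0]
    · rw [if_pos hi0, hunif]
    · intro b _ hb
      rw [if_neg]
      intro hbcond
      exact hdisj b i0 hb t ⟨hbcond, hi0⟩
    · intro hni0; exact absurd (Finset.mem_univ i0) hni0
  · push_neg at hex
    rw [Finset.sum_eq_zero]
    · exact hh.le
    · intro i _
      rw [if_neg]
      rintro ⟨h1, h2⟩
      exact absurd (hex i h1) (not_le.2 h2)
end

section
/- Let α > 1 be a real number and let s_1, …, s_n be positive integers with total sum Σ = s_1 + ⋯ + s_n. Then there exists a subset T ⊆ {1,…,n} with Σ_{i∈T} s_i = Σ_{i∉T} s_i if and only if there exists a function f : {1,…,n} → {0,1} such that (2·Σ_{i: f(i)=0} s_i)^α + (2·Σ_{i: f(i)=1} s_i)^α ≤ 2·Σ^α. (This is the correctness of the reduction from Partition to the Grid problem with unit-width jobs: scheduling the jobs with release time 0, deadline 2, width 1 and height 2s_i into two timeslots achieves cost at most 2(Σ s_i)^α exactly when the set can be partitioned into two equal-sum parts.) -/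
/-!
A function `f` is the same thing as the partition into `T = f⁻¹(false)` and its complement.
Writing `a`, `b` for the two part sums, so that `a + b = Σ`, strict convexity of `x ↦ x ^ α`
at the midpoint `a + b` of `2a` and `2b` gives `(2a)^α + (2b)^α ≥ 2 (a + b)^α`, with equality
exactly when `a = b`.
-/

open Finset

theorem StrictConvexOn.eq_of_add_le_two_mul_map_midpoint {E : Type*} [AddCommGroup E]
    [Module ℝ E] {s : Set E} {f : E → ℝ} (hf : StrictConvexOn ℝ s f) {x y : E} (hx : x ∈ s)
    (hy : y ∈ s) (h : f x + f y ≤ 2 * f ((1 / 2 : ℝ) • x + (1 / 2 : ℝ) • y)) : x = y := by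
  by_contra hxy
  have := hf.2 hx hy hxy (by norm_num : (0 : ℝ) < 1 / 2) (by norm_num : (0 : ℝ) < 1 / 2)
    (by norm_num)
  simp only [smul_eq_mul] at this
  linarith

theorem Real.two_mul_rpow_add_two_mul_rpow_le_iff {α a b : ℝ} (hα : 1 < α) (ha : 0 ≤ a)
    (hb : 0 ≤ b) : (2 * a) ^ α + (2 * b) ^ α ≤ 2 * (a + b) ^ α ↔ a = b := by
  refine ⟨fun h => ?_, fun h => by rw [h, ← two_mul b, two_mul ((2 * b) ^ α)]⟩
  have hmid : (1 / 2 : ℝ) • (2 * a) + (1 / 2 : ℝ) • (2 * b) = a + b := by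
    simp only [smul_eq_mul]; ring
  have := (strictConvexOn_rpow hα).eq_of_add_le_two_mul_map_midpoint
    (Set.mem_Ici.2 (by positivity)) (Set.mem_Ici.2 (by positivity)) (hmid ▸ h)
  linarith

theorem Finset.exists_sum_eq_sum_compl_iff_exists_bool {ι M : Type*} [Fintype ι]
    [DecidableEq ι] [AddCommMonoid M] (s : ι → M) :
    (∃ T : Finset ι, ∑ i ∈ T, s i = ∑ i ∈ Tᶜ, s i) ↔
      ∃ f : ι → Bool, ∑ i ∈ univ.filter (fun i => f i = false), s i =
        ∑ i ∈ univ.filter (fun i => f i = true), s i := by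
  constructor
  · rintro ⟨T, hT⟩
    refine ⟨fun i => decide (i ∉ T), ?_⟩
    simpa [filter_not, compl_eq_univ_sdiff] using hT
  · rintro ⟨f, hf⟩
    refine ⟨univ.filter (fun i => f i = false), ?_⟩
    simpa [filter_not] using hf

theorem Finset.sum_filter_false_add_sum_filter_true {ι M : Type*} [Fintype ι]
    [AddCommMonoid M] (f : ι → Bool) (s : ι → M) :
    ∑ i ∈ univ.filter (fun i => f i = false), s i +
      ∑ i ∈ univ.filter (fun i => f i = true), s i = ∑ i, s i := by
  simpa [add_comm] using sum_filter_add_sum_filter_not univ (fun i => f i = true) s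

theorem stmt19_general (α : ℝ) (hα : 1 < α) (n : ℕ) (s : Fin n → ℕ) :
    (∃ T : Finset (Fin n), ∑ i ∈ T, s i = ∑ i ∈ Tᶜ, s i) ↔
    (∃ f : Fin n → Bool,
      (2 * ∑ i ∈ Finset.univ.filter (fun i => f i = false), (s i : ℝ)) ^ α
        + (2 * ∑ i ∈ Finset.univ.filter (fun i => f i = true), (s i : ℝ)) ^ α
        ≤ 2 * ((∑ i, s i : ℕ) : ℝ) ^ α) := by
  rw [exists_sum_eq_sum_compl_iff_exists_bool]
  refine exists_congr fun f => ?_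
  rw [← sum_filter_false_add_sum_filter_true f s, ← Nat.cast_sum, ← Nat.cast_sum, Nat.cast_add,
    Real.two_mul_rpow_add_two_mul_rpow_le_iff hα (Nat.cast_nonneg _) (Nat.cast_nonneg _),
    Nat.cast_inj]

theorem stmt19 (α : ℝ) (hα : 1 < α) (n : ℕ) (s : Fin n → ℕ) (hs : ∀ i, 0 < s i) :
    (∃ T : Finset (Fin n), ∑ i ∈ T, s i = ∑ i ∈ Tᶜ, s i) ↔
    (∃ f : Fin n → Bool,
      (2 * ∑ i ∈ Finset.univ.filter (fun i => f i = false), (s i : ℝ)) ^ α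
        + (2 * ∑ i ∈ Finset.univ.filter (fun i => f i = true), (s i : ℝ)) ^ α
        ≤ 2 * ((∑ i, s i : ℕ) : ℝ) ^ α) :=
  stmt19_general α hα n s
end
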